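/- arXiv:1802.00806 — 7 statements merged into one kernel-verified Lean document; each statement's English description precedes it below -/
import Mathlib

section
/- Let {σ_i^A}_{i=0,…,d_A²−1} and {σ_j^B}_{j=0,…,d_B²−1} be normalized Hermitian operator bases for d_A×d_A and d_B×d_B matrices respectively. Let W be a Hermitian d_A·d_B × d_A·d_B matrix that is block-positive, i.e. ⟨ψ⊗φ, W(ψ⊗φ)⟩ ≥ 0 for all vectors ψ ∈ ℂ^{d_A}, φ ∈ ℂ^{d_B}. Set w_{ij} = Re(Tr(W·(σ_i^A ⊗ σ_j^B))) and define Λ[λ] = Σ_{i,j} (1/4)·w_{ij}·Tr(σ_i^A·λ)·σ_j^B for d_A×d_A matrices λ. Then Λ is a positive map: for every positive semidefinite d_A×d_A matrix λ, the matrix Λ[λ] is positive semidefinite. -/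
/-!
Since `Tr(σᵢ σⱼ) = 2 δᵢⱼ` and there are `d²` of them, the `σᵢ` form a basis with
`Σᵢ Tr(σᵢ M) σᵢ = 2 M`. Expanding `λ ⊗ φφ*` in the product basis gives
`⟨φ, Λ[λ] φ⟩ = Re Tr(W (λ ⊗ φφ*))`; the traces `Tr(σᵢ λ)` and `Tr(σⱼ φφ*)` are real, so taking
real parts of `wᵢⱼ` costs nothing. Writing `λ = Σₖ vₖ vₖ*` turns this into
`Σₖ Re ⟨vₖ ⊗ φ, W (vₖ ⊗ φ)⟩ ≥ 0` by block positivity, and `Λ[λ]` is Hermitian because its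
coefficients are real.
-/

open Matrix
open scoped Kronecker ComplexOrder

noncomputable section

def IsHermOpBasis {d : ℕ} (σ : Fin (d ^ 2) → Matrix (Fin d) (Fin d) ℂ) : Prop :=
  (∀ i, (σ i).IsHermitian) ∧
  ∀ i j, (σ i * σ j).trace = if i = j then 2 else 0

def vecKron {dA dB : ℕ} (ψ : Fin dA → ℂ) (φ : Fin dB → ℂ) :
    Fin dA × Fin dB → ℂ :=
  fun p => ψ p.1 * φ p.2

namespace Matrix

section Orthogonal

variable {K ι n : Type*} [Field K] [Fintype ι] [DecidableEq ι] [Fintype n]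
  {σ : ι → Matrix n n K} {c : K}

theorem linearIndependent_of_trace_mul_eq_ite (hc : c ≠ 0)
    (hσ : ∀ i j, (σ i * σ j).trace = if i = j then c else 0) : LinearIndependent K σ := by
  rw [Fintype.linearIndependent_iff]
  intro g hg j
  have h := congrArg (fun X => (σ j * X).trace) hg
  simp only [Matrix.mul_sum, Matrix.mul_smul, trace_sum, trace_smul, hσ, smul_eq_mul,
    mul_ite, mul_zero, trace_zero] at h
  simpa [hc] using h

theorem sum_trace_mul_smul_of_trace_mul_eq_ite (hc : c ≠ 0)
    (hσ : ∀ i j, (σ i * σ j).trace = if i = j then c else 0)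
    (hcard : Fintype.card ι = Fintype.card n ^ 2) (M : Matrix n n K) :
    ∑ i, (σ i * M).trace • σ i = c • M := by
  let b := basisOfLinearIndependentOfCardEqFinrank' σ
    (linearIndependent_of_trace_mul_eq_ite hc hσ) (by simp [Module.finrank_matrix, hcard, sq])
  have hb : ⇑b = σ := coe_basisOfLinearIndependentOfCardEqFinrank' _ _ _
  have htrace : ∀ i, (σ i * M).trace = c * b.repr M i := by
    intro i
    conv_lhs => rw [← b.sum_repr M]
    simp [hb, Matrix.mul_sum, trace_sum, hσ, mul_comm]
  conv_rhs => rw [← b.sum_repr M]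
  simp [htrace, Finset.smul_sum, smul_smul, hb]

end Orthogonal

theorem IsHermitian.isSelfAdjoint_trace_mul {n R : Type*} [Fintype n] [CommSemiring R]
    [StarRing R] {A B : Matrix n n R} (hA : A.IsHermitian) (hB : B.IsHermitian) :
    IsSelfAdjoint (A * B).trace := by
  rw [isSelfAdjoint_iff, ← trace_conjTranspose, conjTranspose_mul, hA.eq, hB.eq, trace_mul_comm]

theorem IsHermitian.posSemidef_of_re_dotProduct_nonneg {n : Type*} [Fintype n]
    {A : Matrix n n ℂ} (hA : A.IsHermitian) (h : ∀ x, 0 ≤ (star x ⬝ᵥ (A *ᵥ x)).re) :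
    A.PosSemidef :=
  PosSemidef.of_dotProduct_mulVec_nonneg hA fun x =>
    Complex.nonneg_iff.mpr ⟨h x, (hA.im_star_dotProduct_mulVec_self x).symm⟩

theorem trace_mul_vecMulVec {m n R : Type*} [Fintype m] [Fintype n] [CommSemiring R]
    (M : Matrix n m R) (x : m → R) (y : n → R) :
    (M * vecMulVec x y).trace = y ⬝ᵥ (M *ᵥ x) := by
  rw [mul_vecMulVec, trace_vecMulVec, dotProduct_comm]

theorem sum_kronecker_sum {ι κ l m n p R : Type*} [CommSemiring R] (s : Finset ι) (t : Finset κ)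
    (A : ι → Matrix l m R) (B : κ → Matrix n p R) :
    (∑ i ∈ s, A i) ⊗ₖ (∑ j ∈ t, B j) = ∑ i ∈ s, ∑ j ∈ t, A i ⊗ₖ B j := by
  ext
  simp only [kroneckerMap_apply, sum_apply, Finset.sum_mul_sum]

theorem smul_trace_mul_kronecker_eq_sum {K ι κ m n : Type*} [CommSemiring K] [Fintype ι]
    [Fintype κ] [Fintype m] [Fintype n] {σ : ι → Matrix m m K} {τ : κ → Matrix n n K} {c c' : K}
    (hσ : ∀ X, ∑ i, (σ i * X).trace • σ i = c • X) (hτ : ∀ Y, ∑ j, (τ j * Y).trace • τ j = c' • Y)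
    (Z : Matrix (m × n) (m × n) K) (X : Matrix m m K) (Y : Matrix n n K) :
    (c * c') * (Z * (X ⊗ₖ Y)).trace =
      ∑ i, ∑ j, (σ i * X).trace * (τ j * Y).trace * (Z * (σ i ⊗ₖ τ j)).trace := by
  have hXY : (c * c') • (X ⊗ₖ Y) = (c • X) ⊗ₖ (c' • Y) := by
    rw [smul_kronecker, kronecker_smul, smul_smul]
  rw [← smul_eq_mul, ← trace_smul, ← Matrix.mul_smul, hXY, ← hσ, ← hτ, sum_kronecker_sum]
  simp only [smul_kronecker, kronecker_smul, smul_smul, Matrix.mul_sum, Matrix.mul_smul,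
    trace_sum, trace_smul, smul_eq_mul]
  exact Finset.sum_congr rfl fun i _ => Finset.sum_congr rfl fun j _ => by ring

end Matrix

theorem IsHermOpBasis.sum_trace_mul_smul {d : ℕ} {σ : Fin (d ^ 2) → Matrix (Fin d) (Fin d) ℂ}
    (h : IsHermOpBasis σ) (M : Matrix (Fin d) (Fin d) ℂ) :
    ∑ i, (σ i * M).trace • σ i = (2 : ℂ) • M :=
  sum_trace_mul_smul_of_trace_mul_eq_ite two_ne_zero h.2 (by simp) M

theorem star_vecKron {dA dB : ℕ} (ψ : Fin dA → ℂ) (φ : Fin dB → ℂ) :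
    star (vecKron ψ φ) = vecKron (star ψ) (star φ) := by
  ext
  simp [vecKron]

theorem vecMulVec_kronecker_vecMulVec {dA dB : ℕ} (a b : Fin dA → ℂ) (c d : Fin dB → ℂ) :
    vecMulVec a b ⊗ₖ vecMulVec c d = vecMulVec (vecKron a c) (vecKron b d) := by
  ext
  simp only [kroneckerMap_apply, vecMulVec_apply, vecKron]
  ring

theorem re_trace_mul_kronecker_nonneg_of_block_nonneg {dA dB : ℕ}
    {W : Matrix (Fin dA × Fin dB) (Fin dA × Fin dB) ℂ}
    (hW : ∀ ψ φ, 0 ≤ (star (vecKron ψ φ) ⬝ᵥ (W *ᵥ vecKron ψ φ)).re)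
    {X : Matrix (Fin dA) (Fin dA) ℂ} {Y : Matrix (Fin dB) (Fin dB) ℂ}
    (hX : X.PosSemidef) (hY : Y.PosSemidef) : 0 ≤ (W * (X ⊗ₖ Y)).trace.re := by
  obtain ⟨_, u, rfl⟩ := posSemidef_iff_eq_sum_vecMulVec.mp hX
  obtain ⟨_, v, rfl⟩ := posSemidef_iff_eq_sum_vecMulVec.mp hY
  simp only [sum_kronecker_sum, vecMulVec_kronecker_vecMulVec, ← star_vecKron, Matrix.mul_sum,
    trace_sum, trace_mul_vecMulVec, Complex.re_sum]
  exact Finset.sum_nonneg fun k _ => Finset.sum_nonneg fun l _ => hW (u k) (v l)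

theorem induced_map_positive_general
    {dA dB : ℕ}
    (σA : Fin (dA ^ 2) → Matrix (Fin dA) (Fin dA) ℂ) (hA : IsHermOpBasis σA)
    (σB : Fin (dB ^ 2) → Matrix (Fin dB) (Fin dB) ℂ) (hB : IsHermOpBasis σB)
    (W : Matrix (Fin dA × Fin dB) (Fin dA × Fin dB) ℂ)
    (hblock : ∀ (ψ : Fin dA → ℂ) (φ : Fin dB → ℂ),
      0 ≤ (star (vecKron ψ φ) ⬝ᵥ (W *ᵥ vecKron ψ φ)).re) :
    ∀ lam : Matrix (Fin dA) (Fin dA) ℂ, lam.PosSemidef →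
      (∑ i, ∑ j, (((1 / 4 : ℂ) * ((W * (σA i ⊗ₖ σB j)).trace).re)
        * (σA i * lam).trace) • σB j).PosSemidef := by
  intro lam hlam
  set Λ := ∑ i, ∑ j, (((1 / 4 : ℂ) * ((W * (σA i ⊗ₖ σB j)).trace).re)
    * (σA i * lam).trace) • σB j with hΛ_def
  have hcoefA : ∀ i, IsSelfAdjoint (σA i * lam).trace :=
    fun i => (hA.1 i).isSelfAdjoint_trace_mul hlam.1
  have hΛ : Λ.IsHermitian :=
    isSelfAdjoint_sum _ fun i _ => isSelfAdjoint_sum _ fun j _ =>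
      (IsSelfAdjoint.mul (by simp [isSelfAdjoint_iff]) (hcoefA i)).smul (hB.1 j)
  have hre_term : ∀ {a b : ℂ}, IsSelfAdjoint a → IsSelfAdjoint b → ∀ w : ℂ,
      ((1 / 4 * (w.re : ℂ)) * a * b).re = (a * b * w).re / 4 := by
    intro a b ha hb w
    obtain ⟨x, rfl⟩ := Complex.conj_eq_iff_real.mp ha
    obtain ⟨y, rfl⟩ := Complex.conj_eq_iff_real.mp hb
    rw [show (1 / 4 * (w.re : ℂ)) * x * y = ((w.re * x * y / 4 : ℝ) : ℂ) by push_cast; ring,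
      Complex.ofReal_re, ← Complex.ofReal_mul, Complex.re_ofReal_mul]
    ring
  refine hΛ.posSemidef_of_re_dotProduct_nonneg fun φ => ?_
  have hP := posSemidef_vecMulVec_self_star φ
  rw [← trace_mul_vecMulVec]
  calc 0 ≤ (W * (lam ⊗ₖ vecMulVec φ (star φ))).trace.re :=
        re_trace_mul_kronecker_nonneg_of_block_nonneg hblock hlam hP
    _ = ((2 * 2) * (W * (lam ⊗ₖ vecMulVec φ (star φ))).trace).re / 4 := by norm_num
    _ = (Λ * vecMulVec φ (star φ)).trace.re := by
        rw [smul_trace_mul_kronecker_eq_sum hA.sum_trace_mul_smul hB.sum_trace_mul_smul, hΛ_def]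
        simp only [Matrix.sum_mul, Matrix.smul_mul, trace_sum, trace_smul, smul_eq_mul,
          Complex.re_sum, Finset.sum_div]
        exact Finset.sum_congr rfl fun i _ => Finset.sum_congr rfl fun j _ =>
          (hre_term (hcoefA i) ((hB.1 j).isSelfAdjoint_trace_mul hP.1) _).symm

/-- the map `Λ[λ] = Σᵢⱼ (1/4)·wᵢⱼ·Tr(σᵢᴬ λ)·σⱼᴮ` induced by a
block-positive Hermitian operator `W` (with `wᵢⱼ = Re Tr(W·(σᵢᴬ ⊗ σⱼᴮ))`)
is a positive map. -/
theorem induced_map_positive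
    {dA dB : ℕ}
    (σA : Fin (dA ^ 2) → Matrix (Fin dA) (Fin dA) ℂ) (hA : IsHermOpBasis σA)
    (σB : Fin (dB ^ 2) → Matrix (Fin dB) (Fin dB) ℂ) (hB : IsHermOpBasis σB)
    (W : Matrix (Fin dA × Fin dB) (Fin dA × Fin dB) ℂ) (hW : W.IsHermitian)
    (hblock : ∀ (ψ : Fin dA → ℂ) (φ : Fin dB → ℂ),
      0 ≤ (star (vecKron ψ φ) ⬝ᵥ (W *ᵥ vecKron ψ φ)).re) :
    ∀ lam : Matrix (Fin dA) (Fin dA) ℂ, lam.PosSemidef →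
      (∑ i, ∑ j, (((1 / 4 : ℂ) * ((W * (σA i ⊗ₖ σB j)).trace).re)
        * (σA i * lam).trace) • σB j).PosSemidef :=
  induced_map_positive_general σA hA σB hB W hblock
end
end

section
/- Let {σ_i^A}_{i=0,…,d_A²−1} and {σ_j^B}_{j=0,…,d_B²−1} be normalized Hermitian operator bases for d_A×d_A and d_B×d_B matrices, let (w_{ij}) be real numbers, and let ρ be any d_A·d_B × d_A·d_B complex matrix with correlation coefficients T_{kl} = Tr(ρ·(σ_k^A ⊗ σ_l^B)). Define Λᵈ[μ] = Σ_{i,j} (1/4)·w_{ij}·Tr(σ_j^B·μ)·σ_i^A for d_B×d_B matrices μ. Then the duality-swap identity holds: Tr( ρ · Σ_{i,j} (1/4)·w_{ij}·σ_i^A ⊗ σ_j^B ) = Tr( P · ρ' ), where P = (1/2)·Σ_m σ_m^A ⊗ (σ_m^A)ᵀ and ρ' = (1/4)·Σ_{k,l} T_{kl}·σ_k^A ⊗ (Λᵈ[σ_l^B])ᵀ; both sides equal (1/4)·Σ_{k,l} w_{kl}·T_{kl}. -/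
open Matrix
open scoped Kronecker

noncomputable section

/-- duality-swap identity.  With `T_{kl} = Tr(ρ·(σₖᴬ ⊗ σₗᴮ))`,
`Λᵈ[μ] = Σᵢⱼ (1/4)·wᵢⱼ·Tr(σⱼᴮ μ)·σᵢᴬ`, `P = (1/2)·Σₘ σₘᴬ ⊗ (σₘᴬ)ᵀ` and
`ρ' = (1/4)·Σₖₗ T_{kl}·σₖᴬ ⊗ (Λᵈ[σₗᴮ])ᵀ`, one has
`Tr(ρ · (1/4)·Σᵢⱼ wᵢⱼ·σᵢᴬ ⊗ σⱼᴮ) = Tr(P·ρ')`, both sides being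
`(1/4)·Σₖₗ wₖₗ·Tₖₗ`. -/
theorem duality_swap_identity
    {dA dB : ℕ}
    (σA : Fin (dA ^ 2) → Matrix (Fin dA) (Fin dA) ℂ) (hA : IsHermOpBasis σA)
    (σB : Fin (dB ^ 2) → Matrix (Fin dB) (Fin dB) ℂ) (hB : IsHermOpBasis σB)
    (w : Fin (dA ^ 2) → Fin (dB ^ 2) → ℝ)
    (ρ : Matrix (Fin dA × Fin dB) (Fin dA × Fin dB) ℂ)
    (T : Fin (dA ^ 2) → Fin (dB ^ 2) → ℂ)
    (hT : ∀ k l, T k l = (ρ * (σA k ⊗ₖ σB l)).trace)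
    (Λd : Matrix (Fin dB) (Fin dB) ℂ → Matrix (Fin dA) (Fin dA) ℂ)
    (hΛd : ∀ μ, Λd μ = ∑ i, ∑ j, (((1 / 4 : ℝ) * w i j : ℝ) * (σB j * μ).trace) • σA i)
    (P : Matrix ((Fin dA) × (Fin dA)) ((Fin dA) × (Fin dA)) ℂ)
    (hP : P = (1 / 2 : ℂ) • ∑ m, σA m ⊗ₖ (σA m)ᵀ)
    (ρ' : Matrix ((Fin dA) × (Fin dA)) ((Fin dA) × (Fin dA)) ℂ)
    (hρ' : ρ' = (1 / 4 : ℂ) • ∑ k, ∑ l, T k l • (σA k ⊗ₖ (Λd (σB l))ᵀ)) :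
    (ρ * ((1 / 4 : ℂ) • ∑ i, ∑ j, ((w i j : ℝ) : ℂ) • (σA i ⊗ₖ σB j))).trace
      = (P * ρ').trace ∧
    (P * ρ').trace = (1 / 4 : ℂ) * ∑ k, ∑ l, ((w k l : ℝ) : ℂ) * T k l := by
  -- Tr(Λd(σB l) * σA k) = w k l
  have hLam : ∀ k l, (Λd (σB l) * σA k).trace = ((w k l : ℝ) : ℂ) := by
    intro k l
    rw [hΛd]
    simp only [Finset.sum_mul, smul_mul_assoc, trace_sum, trace_smul, hA.2, hB.2,
      smul_eq_mul, mul_ite, mul_zero, ite_mul, zero_mul]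
    rw [Finset.sum_eq_single k]
    · simp only [Finset.sum_ite_eq', Finset.mem_univ, if_true]
      push_cast; ring
    · intro b _ hb; simp [hb]
    · simp
  have hterm : ∀ (m k : Fin (dA ^ 2)) (l : Fin (dB ^ 2)),
      ((σA m ⊗ₖ (σA m)ᵀ) * (σA k ⊗ₖ (Λd (σB l))ᵀ)).trace
        = (if m = k then (2 : ℂ) else 0) * ((w m l : ℝ) : ℂ) := by
    intro m k l
    rw [← mul_kronecker_mul, trace_kronecker, ← transpose_mul, trace_transpose, hA.2, hLam]
  have hPρ' : (P * ρ').trace = (1 / 4 : ℂ) * ∑ k, ∑ l, ((w k l : ℝ) : ℂ) * T k l := by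
    rw [hP, hρ']
    simp only [smul_mul_assoc, mul_smul_comm, Finset.sum_mul, Finset.mul_sum,
      trace_sum, trace_smul, smul_eq_mul, hterm]
    simp only [mul_ite, ite_mul, mul_zero, zero_mul, Finset.sum_ite_eq',
      Finset.mem_univ, if_true]
    rw [Finset.sum_comm]
    rw [Finset.sum_comm]
    refine Finset.sum_congr rfl fun k _ => Finset.sum_congr rfl fun l _ => ?_
    ring
  have hLHS : (ρ * ((1 / 4 : ℂ) • ∑ i, ∑ j, ((w i j : ℝ) : ℂ) • (σA i ⊗ₖ σB j))).trace
      = (1 / 4 : ℂ) * ∑ k, ∑ l, ((w k l : ℝ) : ℂ) * T k l := by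
    simp only [Matrix.mul_smul, Matrix.mul_sum, mul_smul_comm, trace_smul, trace_sum,
      smul_eq_mul]
    simp only [← hT, Finset.mul_sum]
  exact ⟨hLHS.trans hPρ'.symm, hPρ'⟩
end
end

section
/- Let {σ_i^A}_{i=0,…,d_A²−1} and {σ_j^B}_{j=0,…,d_B²−1} be normalized Hermitian operator bases for d_A×d_A and d_B×d_B matrices. Let ρ be a state on ℂ^{d_A·d_B}, let M be a Hermitian d_A·d_B × d_A·d_B matrix, and let c ∈ ℝ satisfy Re(Tr((ρ₁⊗ρ₂)·M)) ≤ c for all states ρ₁ on ℂ^{d_A}, ρ₂ on ℂ^{d_B}. Assume Re(Tr(ρ·M)) > c. Set w_{ij} = Re(Tr((c·I − M)·(σ_i^A ⊗ σ_j^B))), T_{kl} = Re(Tr(ρ·(σ_k^A ⊗ σ_l^B))), and Λᵈ[μ] = Σ_{i,j} (1/4)·w_{ij}·Tr(σ_j^B·μ)·σ_i^A. Then the d_A²×d_A² matrix ρ' = (1/4)·Σ_{k,l} T_{kl}·σ_k^A ⊗ (Λᵈ[σ_l^B])ᵀ is NOT positive semidefinite. (In other words, the positive map 𝒯∘Λᵈ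 built from the functional entanglement identifier detects the entanglement of ρ: (id ⊗ 𝒯∘Λᵈ)[ρ] ≱ 0.) -/
open Matrix
open scoped Kronecker ComplexOrder

noncomputable section

def IsQState {n : Type*} [Fintype n] (ρ : Matrix n n ℂ) : Prop :=
  ρ.PosSemidef ∧ ρ.trace = 1

/-!
With `Ω = ∑ᵢ eᵢ ⊗ eᵢ` one has `⟨Ω, (A ⊗ Bᵀ) Ω⟩ = Tr (A B)`, and orthogonality of the bases gives
`Tr (σᴬₖ Λᵈ[σᴮₗ]) = w k l`; hence `⟨Ω, ρ' Ω⟩ = ¼ ∑ T k l w k l`. The products `σᴬᵢ ⊗ σᴮⱼ` form an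
orthogonal basis with `Tr` of squares `4`, so by Parseval this sum is `Tr (ρ (c I - M)) = c - Tr (ρ M)`,
which is negative.
-/

namespace Matrix

section TraceOrthogonal

variable {𝕜 n ι : Type*} [Field 𝕜] [Fintype n] [Fintype ι] [DecidableEq ι]
  {v : ι → Matrix n n 𝕜} {a : 𝕜}

theorem trace_sum_smul_mul_of_trace_mul_eq_ite
    (horth : ∀ i j, (v i * v j).trace = if i = j then a else 0) (d : ι → 𝕜) (j : ι) :
    ((∑ i, d i • v i) * v j).trace = d j * a := by
  simp only [Matrix.sum_mul, smul_mul, trace_sum, trace_smul, smul_eq_mul, horth, mul_ite, mul_zero,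
    Finset.sum_ite_eq', Finset.mem_univ, if_true]

theorem linearIndependent_of_trace_mul_eq_ite_s9 (ha : a ≠ 0)
    (horth : ∀ i j, (v i * v j).trace = if i = j then a else 0) :
    LinearIndependent 𝕜 v := by
  refine Fintype.linearIndependent_iff.mpr fun d hd j => ?_
  have h := trace_sum_smul_mul_of_trace_mul_eq_ite horth d j
  rw [hd, zero_mul, trace_zero] at h
  exact (mul_eq_zero.mp h.symm).resolve_right ha

theorem eq_sum_trace_mul_smul_of_trace_mul_eq_ite [DecidableEq n] (ha : a ≠ 0)
    (horth : ∀ i j, (v i * v j).trace = if i = j then a else 0)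
    (hcard : Fintype.card ι = Fintype.card n ^ 2) (X : Matrix n n 𝕜) :
    X = ∑ i, (a⁻¹ * (X * v i).trace) • v i := by
  have hspan : Submodule.span 𝕜 (Set.range v) = ⊤ :=
    (linearIndependent_of_trace_mul_eq_ite_s9 ha horth).span_eq_top_of_card_eq_finrank' <| by
      simp [Module.finrank_matrix, hcard, sq]
  obtain ⟨d, hd⟩ := (Submodule.mem_span_range_iff_exists_fun 𝕜).mp (hspan ▸ Submodule.mem_top (x := X))
  have hcoeff : ∀ j, d j = a⁻¹ * (X * v j).trace := fun j => by
    rw [← hd, trace_sum_smul_mul_of_trace_mul_eq_ite horth, mul_comm, mul_inv_cancel_right₀ ha]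
  simp_rw [← hcoeff, hd]

theorem trace_mul_eq_sum_of_trace_mul_eq_ite [DecidableEq n] (ha : a ≠ 0)
    (horth : ∀ i j, (v i * v j).trace = if i = j then a else 0)
    (hcard : Fintype.card ι = Fintype.card n ^ 2) (X Y : Matrix n n 𝕜) :
    (Y * X).trace = a⁻¹ * ∑ i, (X * v i).trace * (Y * v i).trace := by
  conv_lhs => rw [eq_sum_trace_mul_smul_of_trace_mul_eq_ite ha horth hcard X]
  simp only [Matrix.mul_smul, trace_sum, trace_smul, smul_eq_mul, Finset.mul_sum, mul_assoc]

end TraceOrthogonal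

theorem trace_kronecker_mul_kronecker_eq_ite {R ι κ m n : Type*} [CommRing R] [Fintype m]
    [Fintype n] [DecidableEq ι] [DecidableEq κ] {v : ι → Matrix m m R} {u : κ → Matrix n n R}
    {a b : R} (hv : ∀ i j, (v i * v j).trace = if i = j then a else 0)
    (hu : ∀ k l, (u k * u l).trace = if k = l then b else 0) (p q : ι × κ) :
    ((v p.1 ⊗ₖ u p.2) * (v q.1 ⊗ₖ u q.2)).trace = if p = q then a * b else 0 := by
  rw [← mul_kronecker_mul, trace_kronecker, hv, hu]
  simp only [Prod.ext_iff]
  split_ifs <;> simp_all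

theorem IsHermitian.kronecker {R m n : Type*} [CommSemiring R] [StarRing R] {A : Matrix m m R}
    {B : Matrix n n R} (hA : A.IsHermitian) (hB : B.IsHermitian) : (A ⊗ₖ B).IsHermitian := by
  rw [IsHermitian, conjTranspose_kronecker, hA.eq, hB.eq]

theorem IsHermitian.trace_mul_eq_re {n : Type*} [Fintype n] {A B : Matrix n n ℂ}
    (hA : A.IsHermitian) (hB : B.IsHermitian) : (A * B).trace = ((A * B).trace.re : ℂ) := by
  refine (Complex.conj_eq_iff_re.mp ?_).symm
  rw [← Complex.star_def, ← trace_conjTranspose, conjTranspose_mul, hA.eq, hB.eq, trace_mul_comm]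

/-- The unnormalised maximally entangled vector `∑ i, eᵢ ⊗ eᵢ`. -/
def maxEntangledVec (R n : Type*) [Zero R] [One R] [DecidableEq n] : n × n → R :=
  fun p => if p.1 = p.2 then 1 else 0

theorem star_maxEntangledVec_dotProduct_kronecker_transpose_mulVec {R n : Type*} [CommSemiring R]
    [StarRing R] [Fintype n] [DecidableEq n] (A B : Matrix n n R) :
    star (maxEntangledVec R n) ⬝ᵥ ((A ⊗ₖ Bᵀ) *ᵥ maxEntangledVec R n) = (A * B).trace := by
  simp [maxEntangledVec, dotProduct, mulVec, trace, mul_apply, Fintype.sum_prod_type,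
    apply_ite, ite_mul, Finset.sum_ite_eq]

theorem trace_mul_sum_sum_smul_trace_mul {R ι κ m n : Type*} [CommRing R] [Fintype m] [Fintype n]
    [Fintype ι] [Fintype κ] [DecidableEq ι] [DecidableEq κ] {v : ι → Matrix m m R}
    {u : κ → Matrix n n R} {a b : R} (hv : ∀ i j, (v i * v j).trace = if i = j then a else 0)
    (hu : ∀ k l, (u k * u l).trace = if k = l then b else 0) (f : ι → κ → R) (k : ι) (l : κ) :
    (v k * ∑ i, ∑ j, (f i j * (u j * u l).trace) • v i).trace = a * b * f k l := by
  simp only [Matrix.mul_sum, Matrix.mul_smul, trace_sum, trace_smul, smul_eq_mul, hu, hv, mul_ite,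
    ite_mul, mul_zero, zero_mul, Finset.sum_ite_irrel, Finset.sum_ite_eq, Finset.sum_ite_eq',
    Finset.mem_univ, if_true, Finset.sum_const_zero]
  ring

end Matrix

theorem IsHermOpBasis.trace_mul_eq_sum_re_mul_re {dA dB : ℕ}
    {σA : Fin (dA ^ 2) → Matrix (Fin dA) (Fin dA) ℂ} {σB : Fin (dB ^ 2) → Matrix (Fin dB) (Fin dB) ℂ}
    (hA : IsHermOpBasis σA) (hB : IsHermOpBasis σB)
    {X Y : Matrix (Fin dA × Fin dB) (Fin dA × Fin dB) ℂ} (hX : X.IsHermitian)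
    (hY : Y.IsHermitian) :
    (Y * X).trace = 1 / 4 * ∑ k, ∑ l,
      ((X * (σA k ⊗ₖ σB l)).trace.re : ℂ) * ((Y * (σA k ⊗ₖ σB l)).trace.re : ℂ) := by
  have hherm (k l) := (hA.1 k).kronecker (hB.1 l)
  rw [trace_mul_eq_sum_of_trace_mul_eq_ite (by norm_num)
    (trace_kronecker_mul_kronecker_eq_ite hA.2 hB.2) (by simp [mul_pow]) X Y,
    Fintype.sum_prod_type]
  simp only [← hX.trace_mul_eq_re (hherm _ _), ← hY.trace_mul_eq_re (hherm _ _)]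
  norm_num

theorem induced_map_detects_entanglement_general
    {dA dB : ℕ}
    (σA : Fin (dA ^ 2) → Matrix (Fin dA) (Fin dA) ℂ) (hA : IsHermOpBasis σA)
    (σB : Fin (dB ^ 2) → Matrix (Fin dB) (Fin dB) ℂ) (hB : IsHermOpBasis σB)
    (ρ : Matrix (Fin dA × Fin dB) (Fin dA × Fin dB) ℂ) (hρ : IsQState ρ)
    (M : Matrix (Fin dA × Fin dB) (Fin dA × Fin dB) ℂ) (hM : M.IsHermitian)
    (c : ℝ)
    (h : c < ((ρ * M).trace).re)
    (w : Fin (dA ^ 2) → Fin (dB ^ 2) → ℝ)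
    (hw : ∀ i j, w i j = ((((c : ℂ) • (1 : Matrix (Fin dA × Fin dB) (Fin dA × Fin dB) ℂ) - M)
      * (σA i ⊗ₖ σB j)).trace).re)
    (T : Fin (dA ^ 2) → Fin (dB ^ 2) → ℝ)
    (hT : ∀ k l, T k l = ((ρ * (σA k ⊗ₖ σB l)).trace).re)
    (Λd : Matrix (Fin dB) (Fin dB) ℂ → Matrix (Fin dA) (Fin dA) ℂ)
    (hΛd : ∀ μ, Λd μ = ∑ i, ∑ j, (((1 / 4 : ℝ) * w i j : ℝ) * (σB j * μ).trace) • σA i)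
    (ρ' : Matrix ((Fin dA) × (Fin dA)) ((Fin dA) × (Fin dA)) ℂ)
    (hρ' : ρ' = (1 / 4 : ℂ) • ∑ k, ∑ l, ((T k l : ℝ) : ℂ) • (σA k ⊗ₖ (Λd (σB l))ᵀ)) :
    ¬ ρ'.PosSemidef := by
  intro hρ'_psd
  set W := (c : ℂ) • (1 : Matrix (Fin dA × Fin dB) (Fin dA × Fin dB) ℂ) - M
  have hW : W.IsHermitian := (isHermitian_one.smul (Complex.conj_ofReal c)).sub hM
  have hΛ (k l) : (σA k * Λd (σB l)).trace = w k l := by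
    rw [hΛd, trace_mul_sum_sum_smul_trace_mul hA.2 hB.2]
    push_cast
    ring
  have hquad : star (maxEntangledVec ℂ (Fin dA)) ⬝ᵥ (ρ' *ᵥ maxEntangledVec ℂ (Fin dA))
      = c - (ρ * M).trace := calc
    _ = 1 / 4 * ∑ k, ∑ l, (T k l : ℂ) * w k l := by
      simp only [hρ', smul_mulVec, sum_mulVec, dotProduct_sum, dotProduct_smul, smul_eq_mul,
        star_maxEntangledVec_dotProduct_kronecker_transpose_mulVec, hΛ]
    _ = (ρ * W).trace := by
      simp only [hA.trace_mul_eq_sum_re_mul_re hB hW hρ.1.1, hw, hT, mul_comm]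
    _ = c - (ρ * M).trace := by
      simp [W, Matrix.mul_sub, hρ.2]
  have hnonneg := hρ'_psd.dotProduct_mulVec_nonneg (maxEntangledVec ℂ (Fin dA))
  rw [hquad, Complex.nonneg_iff] at hnonneg
  simp only [Complex.sub_re, Complex.ofReal_re] at hnonneg
  linarith [hnonneg.1]

/-- the positive map `𝒯 ∘ Λᵈ` built from a functional entanglement
identifier detects the entanglement of `ρ`: the matrix
`ρ' = (id ⊗ 𝒯∘Λᵈ)[ρ]` is not positive semidefinite. -/
theorem induced_map_detects_entanglement
    {dA dB : ℕ}
    (σA : Fin (dA ^ 2) → Matrix (Fin dA) (Fin dA) ℂ) (hA : IsHermOpBasis σA)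
    (σB : Fin (dB ^ 2) → Matrix (Fin dB) (Fin dB) ℂ) (hB : IsHermOpBasis σB)
    (ρ : Matrix (Fin dA × Fin dB) (Fin dA × Fin dB) ℂ) (hρ : IsQState ρ)
    (M : Matrix (Fin dA × Fin dB) (Fin dA × Fin dB) ℂ) (hM : M.IsHermitian)
    (c : ℝ)
    (hc : ∀ (ρ₁ : Matrix (Fin dA) (Fin dA) ℂ) (ρ₂ : Matrix (Fin dB) (Fin dB) ℂ),
      IsQState ρ₁ → IsQState ρ₂ → (((ρ₁ ⊗ₖ ρ₂) * M).trace).re ≤ c)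
    (h : c < ((ρ * M).trace).re)
    (w : Fin (dA ^ 2) → Fin (dB ^ 2) → ℝ)
    (hw : ∀ i j, w i j = ((((c : ℂ) • (1 : Matrix (Fin dA × Fin dB) (Fin dA × Fin dB) ℂ) - M)
      * (σA i ⊗ₖ σB j)).trace).re)
    (T : Fin (dA ^ 2) → Fin (dB ^ 2) → ℝ)
    (hT : ∀ k l, T k l = ((ρ * (σA k ⊗ₖ σB l)).trace).re)
    (Λd : Matrix (Fin dB) (Fin dB) ℂ → Matrix (Fin dA) (Fin dA) ℂ)
    (hΛd : ∀ μ, Λd μ = ∑ i, ∑ j, (((1 / 4 : ℝ) * w i j : ℝ) * (σB j * μ).trace) • σA i)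
    (ρ' : Matrix ((Fin dA) × (Fin dA)) ((Fin dA) × (Fin dA)) ℂ)
    (hρ' : ρ' = (1 / 4 : ℂ) • ∑ k, ∑ l, ((T k l : ℝ) : ℂ) • (σA k ⊗ₖ (Λd (σB l))ᵀ)) :
    ¬ ρ'.PosSemidef :=
  induced_map_detects_entanglement_general σA hA σB hB ρ hρ M hM c h w hw T hT Λd hΛd ρ' hρ'
end
end

section
/- For all states ρ₁ and ρ₂ on ℂ², Re(Tr( (ρ₁ ⊗ ρ₂) · ( −(1/4)·Σ_{k=1}^{3} σ_k ⊗ σ_k ) )) ≤ 1/4, and equality is attained for ρ₁ = |0⟩⟨0| = !![1,0;0,0] and ρ₂ = |1⟩⟨1| = !![0,0;0,1]. (Thus the maximal overlap ω̃₀ of the map 𝒢_PPT with product two-qubit states equals 1/4.) -/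
open Matrix
open scoped Kronecker ComplexOrder

noncomputable section

def pauli : Fin 4 → Matrix (Fin 2) (Fin 2) ℂ :=
  ![1,
    !![0, 1; 1, 0],
    !![0, -Complex.I; Complex.I, 0],
    !![1, 0; 0, -1]]

lemma qfacts {ρ : Matrix (Fin 2) (Fin 2) ℂ} (h : IsQState ρ) :
    (ρ 0 0).im = 0 ∧ (ρ 1 1).im = 0 ∧ (ρ 1 0).re = (ρ 0 1).re ∧ (ρ 1 0).im = -(ρ 0 1).im ∧
    (ρ 0 0).re + (ρ 1 1).re = 1 ∧ 0 ≤ (ρ 0 0).re ∧ 0 ≤ (ρ 1 1).re ∧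
    (ρ 0 1).re ^ 2 + (ρ 0 1).im ^ 2 ≤ (ρ 0 0).re * (ρ 1 1).re := by
  obtain ⟨hpsd, htr⟩ := h
  have herm := hpsd.isHermitian
  have h00 : (starRingEnd ℂ) (ρ 0 0) = ρ 0 0 := congrFun (congrFun herm 0) 0
  have h11 : (starRingEnd ℂ) (ρ 1 1) = ρ 1 1 := congrFun (congrFun herm 1) 1
  have h01 : (starRingEnd ℂ) (ρ 1 0) = ρ 0 1 := congrFun (congrFun herm 0) 1
  have i00 : (ρ 0 0).im = 0 := by
    have := congrArg Complex.im h00; rw [Complex.conj_im] at this; linarith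
  have i11 : (ρ 1 1).im = 0 := by
    have := congrArg Complex.im h11; rw [Complex.conj_im] at this; linarith
  have hre : (ρ 1 0).re = (ρ 0 1).re := by
    have := congrArg Complex.re h01; simpa [Complex.conj_re] using this
  have him : (ρ 1 0).im = -(ρ 0 1).im := by
    have := congrArg Complex.im h01; simp [Complex.conj_im] at this; linarith
  have htr' : (ρ 0 0).re + (ρ 1 1).re = 1 := by
    have := congrArg Complex.re htr
    simpa [Matrix.trace, Fin.sum_univ_two] using this
  have ha : 0 ≤ (ρ 0 0).re := by
    have := hpsd.re_dotProduct_nonneg ![1, 0]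
    simpa [dotProduct, mulVec, Fin.sum_univ_two] using this
  have hd : 0 ≤ (ρ 1 1).re := by
    have := hpsd.re_dotProduct_nonneg ![0, 1]
    simpa [dotProduct, mulVec, Fin.sum_univ_two] using this
  refine ⟨i00, i11, hre, him, htr', ha, hd, ?_⟩
  have hA := hpsd.re_dotProduct_nonneg ![-(ρ 0 1), (((ρ 0 0).re : ℝ) : ℂ)]
  have hD := hpsd.re_dotProduct_nonneg ![(((ρ 1 1).re : ℝ) : ℂ), -(ρ 1 0)]
  simp [dotProduct, mulVec, Fin.sum_univ_two, Complex.mul_re, Complex.add_re, Complex.mul_im,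
    Complex.add_im, i00, i11, hre, him] at hA hD
  nlinarith [hA, hD, sq_nonneg ((ρ 0 1).re), sq_nonneg ((ρ 0 1).im)]

lemma value_eq (ρ₁ ρ₂ : Matrix (Fin 2) (Fin 2) ℂ) :
    (((ρ₁ ⊗ₖ ρ₂)
        * (-(1 / 4 : ℂ) • ∑ k ∈ ({1, 2, 3} : Finset (Fin 4)), pauli k ⊗ₖ pauli k)).trace).re
    = (-1/4) * ((ρ₁ 0 0).re - (ρ₁ 1 1).re) * ((ρ₂ 0 0).re - (ρ₂ 1 1).re)
      + (1/4) * ((ρ₁ 0 0).im - (ρ₁ 1 1).im) * ((ρ₂ 0 0).im - (ρ₂ 1 1).im)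
      - (1/2) * ((ρ₁ 0 1).re * (ρ₂ 1 0).re - (ρ₁ 0 1).im * (ρ₂ 1 0).im
                 + (ρ₁ 1 0).re * (ρ₂ 0 1).re - (ρ₁ 1 0).im * (ρ₂ 0 1).im) := by
  simp [pauli, Matrix.trace, Matrix.mul_apply, Matrix.kroneckerMap_apply,
    Fintype.sum_prod_type, Fin.sum_univ_two, Finset.sum_insert, Finset.sum_singleton,
    Complex.add_re, Complex.mul_re, Complex.add_im, Complex.mul_im]
  ring

/-- the maximal overlap of `𝒢_PPT = −(1/4)·Σₖ σₖ ⊗ σₖ` with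
product two-qubit states equals `1/4`, attained at `|0⟩⟨0| ⊗ |1⟩⟨1|`. -/
theorem gppt_max_overlap :
    (∀ ρ₁ ρ₂ : Matrix (Fin 2) (Fin 2) ℂ, IsQState ρ₁ → IsQState ρ₂ →
      (((ρ₁ ⊗ₖ ρ₂)
        * (-(1 / 4 : ℂ) • ∑ k ∈ ({1, 2, 3} : Finset (Fin 4)), pauli k ⊗ₖ pauli k)).trace).re
        ≤ 1 / 4) ∧
    ((((!![(1 : ℂ), 0; 0, 0]) ⊗ₖ (!![(0 : ℂ), 0; 0, 1]))
        * (-(1 / 4 : ℂ) • ∑ k ∈ ({1, 2, 3} : Finset (Fin 4)), pauli k ⊗ₖ pauli k)).trace).re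
      = 1 / 4 := by
  constructor
  · intro ρ₁ ρ₂ h₁ h₂
    obtain ⟨i1, i1', c1r, c1i, t1, a1, d1, q1⟩ := qfacts h₁
    obtain ⟨i2, i2', c2r, c2i, t2, a2, d2, q2⟩ := qfacts h₂
    rw [value_eq, i1, i1', i2, i2', c1r, c1i, c2r, c2i]
    have h1 : ((ρ₁ 0 0).re - (ρ₁ 1 1).re)^2 + 4*(ρ₁ 0 1).re^2 + 4*(ρ₁ 0 1).im^2 ≤ 1 := by
      nlinarith [q1, t1]
    have h2 : ((ρ₂ 0 0).re - (ρ₂ 1 1).re)^2 + 4*(ρ₂ 0 1).re^2 + 4*(ρ₂ 0 1).im^2 ≤ 1 := by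
      nlinarith [q2, t2]
    nlinarith [h1, h2,
      sq_nonneg (((ρ₁ 0 0).re - (ρ₁ 1 1).re) + ((ρ₂ 0 0).re - (ρ₂ 1 1).re)),
      sq_nonneg (2*(ρ₁ 0 1).re + 2*(ρ₂ 0 1).re),
      sq_nonneg (2*(ρ₁ 0 1).im + 2*(ρ₂ 0 1).im)]
  · rw [value_eq]
    norm_num
end
end

section
/- Let ρ be a state on ℂ⁴ (a two-qubit state). If Σ_{i=1}^{3} Re(Tr(ρ·(σ_i ⊗ σ_i))) < −1, then ρ is not separable, i.e. ρ is entangled. (This is the functional entanglement indicator generated by the map 𝒢_PPT[ρ] = −(1/4)·Σ_{i=1}^{3} σ_i ⊗ σ_i; it detects, e.g., the singlet state, for which the sum equals −3.) -/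
open Matrix
open scoped Kronecker ComplexOrder

noncomputable section

def IsSepState {dA dB : ℕ}
    (ρ : Matrix (Fin dA × Fin dB) (Fin dA × Fin dB) ℂ) : Prop :=
  ∃ (k : ℕ) (p : Fin k → ℝ)
    (ρ₁ : Fin k → Matrix (Fin dA) (Fin dA) ℂ)
    (ρ₂ : Fin k → Matrix (Fin dB) (Fin dB) ℂ),
    (∀ m, 0 ≤ p m) ∧ (∑ m, p m = 1) ∧
    (∀ m, IsQState (ρ₁ m)) ∧ (∀ m, IsQState (ρ₂ m)) ∧
    ρ = ∑ m, (p m : ℂ) • (ρ₁ m ⊗ₖ ρ₂ m)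

lemma diag_re_nonneg (A : Matrix (Fin 2) (Fin 2) ℂ) (hA : A.PosSemidef) (i : Fin 2) :
    0 ≤ (A i i).re := by
  have := hA.re_dotProduct_nonneg (fun j => if j = i then 1 else 0)
  simpa [dotProduct, mulVec, Fin.sum_univ_two, Fin.isValue] using this

lemma offdiag_bound (A : Matrix (Fin 2) (Fin 2) ℂ) (hA : A.PosSemidef) :
    Complex.normSq (A 0 1) ≤ (A 0 0).re * (A 1 1).re := by
  have h10 : A 1 0 = star (A 0 1) := (hA.isHermitian.apply 1 0).symm
  have him0 : (A 0 0).im = 0 := Complex.conj_eq_iff_im.mp (hA.isHermitian.apply 0 0)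
  set a := (A 0 0).re with ha'
  set b := (A 1 1).re with hb'
  set r := Complex.normSq (A 0 1) with hr'
  have ha : 0 ≤ a := diag_re_nonneg A hA 0
  have hb : 0 ≤ b := diag_re_nonneg A hA 1
  have hrnn : 0 ≤ r := Complex.normSq_nonneg _
  have key : ∀ t : ℝ, 0 ≤ (a * r) * (t * t) + (2 * r) * t + b := by
    intro t
    have := hA.re_dotProduct_nonneg ![(t:ℂ) * A 0 1, 1]
    simp [dotProduct, mulVec, Fin.sum_univ_two, h10, Complex.star_def, Complex.mul_re,
      Complex.mul_im, Complex.add_re, Complex.add_im, Complex.conj_re, Complex.conj_im,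
      Complex.ofReal_re, Complex.ofReal_im, Complex.one_re, Complex.one_im] at this
    rw [hr', ha', hb']
    rw [Complex.normSq_apply]
    nlinarith [this, him0]
  have hd := discrim_le_zero key
  rw [discrim] at hd
  -- hd : (2*r)^2 - 4 * (a*r) * b ≤ 0
  rcases eq_or_lt_of_le hrnn with h0 | hpos
  · rw [← h0]; positivity
  · nlinarith [hd, hpos]

/-- For a 2x2 state, the Bloch vector has norm ≤ 1, stated via pauli traces. -/
lemma pauli_trace_re (A : Matrix (Fin 2) (Fin 2) ℂ) (hA : IsQState A) :
    ((A * pauli 1).trace.im = 0 ∧ (A * pauli 2).trace.im = 0 ∧ (A * pauli 3).trace.im = 0)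
    ∧ ((A * pauli 1).trace.re)^2 + ((A * pauli 2).trace.re)^2 + ((A * pauli 3).trace.re)^2 ≤ 1 := by
  obtain ⟨hpsd, htr⟩ := hA
  have h10 : A 1 0 = star (A 0 1) := (hpsd.isHermitian.apply 1 0).symm
  have him0 : (A 0 0).im = 0 := Complex.conj_eq_iff_im.mp (hpsd.isHermitian.apply 0 0)
  have him1 : (A 1 1).im = 0 := Complex.conj_eq_iff_im.mp (hpsd.isHermitian.apply 1 1)
  have hdet := offdiag_bound A hpsd
  rw [Complex.normSq_apply] at hdet
  have htr' : (A 0 0).re + (A 1 1).re = 1 ∧ (A 0 0).im + (A 1 1).im = 0 := by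
    rw [Matrix.trace] at htr
    have := congrArg Complex.re htr
    have := congrArg Complex.im htr
    constructor
    · simpa [Fin.sum_univ_two, Matrix.diag] using congrArg Complex.re htr
    · simpa [Fin.sum_univ_two, Matrix.diag] using congrArg Complex.im htr
  have e1 : (A * pauli 1).trace = A 0 1 + star (A 0 1) := by
    simp [pauli, Matrix.trace, Matrix.diag, Matrix.mul_apply, Fin.sum_univ_two, h10]
  have e2 : (A * pauli 2).trace = Complex.I * A 0 1 - Complex.I * star (A 0 1) := by
    simp [pauli, Matrix.trace, Matrix.diag, Matrix.mul_apply, Fin.sum_univ_two, h10]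
    ring
  have e3 : (A * pauli 3).trace = A 0 0 - A 1 1 := by
    simp [pauli, Matrix.trace, Matrix.diag, Matrix.mul_apply, Fin.sum_univ_two, h10]
    ring
  rw [e1, e2, e3]
  simp only [Complex.add_re, Complex.add_im, Complex.sub_re, Complex.sub_im, Complex.mul_re,
    Complex.mul_im, Complex.I_re, Complex.I_im, Complex.star_def, Complex.conj_re, Complex.conj_im]
  constructor
  · refine ⟨by ring, ?_, ?_⟩ <;> (ring_nf; all_goals nlinarith [him0, him1])
  · nlinarith [hdet, htr'.1]

lemma prod_bound (A B : Matrix (Fin 2) (Fin 2) ℂ) (hA : IsQState A) (hB : IsQState B) :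
    -1 ≤ ∑ i ∈ ({1, 2, 3} : Finset (Fin 4)), ((A * pauli i).trace * (B * pauli i).trace).re := by
  obtain ⟨⟨a1, a2, a3⟩, hAb⟩ := pauli_trace_re A hA
  obtain ⟨⟨b1, b2, b3⟩, hBb⟩ := pauli_trace_re B hB
  rw [show ({1, 2, 3} : Finset (Fin 4)) = insert 1 (insert 2 {3}) from rfl,
    Finset.sum_insert (by decide), Finset.sum_insert (by decide), Finset.sum_singleton]
  simp only [Complex.mul_re, a1, a2, a3, b1, b2, b3, mul_zero, sub_zero, zero_mul]
  nlinarith [hAb, hBb, sq_nonneg ((A * pauli 1).trace.re + (B * pauli 1).trace.re),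
    sq_nonneg ((A * pauli 2).trace.re + (B * pauli 2).trace.re),
    sq_nonneg ((A * pauli 3).trace.re + (B * pauli 3).trace.re)]

lemma expand {k : ℕ} (p : Fin k → ℝ) (ρ₁ ρ₂ : Fin k → Matrix (Fin 2) (Fin 2) ℂ) (i : Fin 4) :
    (((∑ m, (p m : ℂ) • (ρ₁ m ⊗ₖ ρ₂ m)) * (pauli i ⊗ₖ pauli i)).trace)
      = ∑ m, (p m : ℂ) * ((ρ₁ m * pauli i).trace * (ρ₂ m * pauli i).trace) := by
  rw [Finset.sum_mul, Matrix.trace_sum]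
  refine Finset.sum_congr rfl fun m _ => ?_
  rw [Matrix.smul_mul, Matrix.trace_smul, ← Matrix.mul_kronecker_mul, Matrix.trace_kronecker,
    smul_eq_mul]

/-- a two-qubit state `ρ` with `Σᵢ Re Tr(ρ·(σᵢ ⊗ σᵢ)) < −1`
is entangled. -/
theorem gppt_functional_indicator
    (ρ : Matrix (Fin 2 × Fin 2) (Fin 2 × Fin 2) ℂ) (hρ : IsQState ρ)
    (h : ∑ i ∈ ({1, 2, 3} : Finset (Fin 4)), ((ρ * (pauli i ⊗ₖ pauli i)).trace).re < -1) :
    ¬ IsSepState ρ := by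
  rintro ⟨k, p, ρ₁, ρ₂, hp, hpsum, hq1, hq2, rfl⟩
  have hre : ∀ i ∈ ({1, 2, 3} : Finset (Fin 4)),
      (((∑ m, (p m : ℂ) • (ρ₁ m ⊗ₖ ρ₂ m)) * (pauli i ⊗ₖ pauli i)).trace).re
        = ∑ m, p m * ((ρ₁ m * pauli i).trace * (ρ₂ m * pauli i).trace).re := by
    intro i _
    rw [expand, Complex.re_sum]
    refine Finset.sum_congr rfl fun m _ => ?_
    simp [Complex.mul_re]
  rw [Finset.sum_congr rfl hre, Finset.sum_comm] at h
  have hge : -1 ≤ ∑ m, ∑ i ∈ ({1, 2, 3} : Finset (Fin 4)),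
      p m * ((ρ₁ m * pauli i).trace * (ρ₂ m * pauli i).trace).re := by
    calc (-1 : ℝ) = ∑ m, p m * (-1) := by
          rw [← Finset.sum_mul, hpsum]; ring
      _ ≤ _ := Finset.sum_le_sum fun m _ => by
          rw [← Finset.mul_sum]
          exact mul_le_mul_of_nonneg_left (prod_bound _ _ (hq1 m) (hq2 m)) (hp m)
  linarith
end
end

section
/- Let ρ be a state on ℂ⁴ (a two-qubit state) whose full correlation tensor is diagonal: Tr(ρ·(σ_i ⊗ σ_j)) = 0 for all i ≠ j with i,j ∈ {1,2,3}. Write p = Re(Tr(ρ·(σ₁⊗σ₁))), q = Re(Tr(ρ·(σ₂⊗σ₂))), r = Re(Tr(ρ·(σ₃⊗σ₃))). If p² + q² + r² > max(|p|, |q|, |r|), then ρ is not separable, i.e. ρ is entangled. (This is the geometric entanglement condition with the standard improper metric tensor, evaluated on the Weyl states.) -/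
/-! For qubit states with Bloch vectors `a` and `b`, the product state has diagonal correlations
`aᵢ bᵢ`, so `∑ cᵢ aᵢ bᵢ ≤ M (‖a‖² + ‖b‖²) / 2 ≤ M` whenever every `|cᵢ| ≤ M`. This bound is linear
in the state, hence holds for all separable states; with `c = (p, q, r)` and
`M = max (|p|, |q|, |r|)` it reads `p² + q² + r² ≤ M`. -/

open Matrix
open scoped Kronecker ComplexOrder

noncomputable section

lemma pauli_isHermitian (i : Fin 4) : (pauli i).IsHermitian := by
  fin_cases i
  · exact isHermitian_one
  all_goals
    ext a b
    fin_cases a <;> fin_cases b <;> simp [pauli, conjTranspose_apply]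

lemma Matrix.IsHermitian.ofReal_re_trace_mul {n : Type*} [Fintype n] {A B : Matrix n n ℂ}
    (hA : A.IsHermitian) (hB : B.IsHermitian) : (((A * B).trace).re : ℂ) = (A * B).trace := by
  have h : star (A * B).trace = (A * B).trace := by
    rw [← trace_conjTranspose, conjTranspose_mul, hA.eq, hB.eq, trace_mul_comm]
  exact Complex.conj_eq_iff_re.mp h

lemma re_trace_kronecker_mul_kronecker {m n : Type*} [Fintype m] [Fintype n]
    {A S : Matrix m m ℂ} {B T : Matrix n n ℂ} (hA : A.IsHermitian) (hS : S.IsHermitian)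
    (hB : B.IsHermitian) (hT : T.IsHermitian) :
    ((A ⊗ₖ B) * (S ⊗ₖ T)).trace.re = (A * S).trace.re * (B * T).trace.re := by
  rw [← mul_kronecker_mul, trace_kronecker, ← hA.ofReal_re_trace_mul hS,
    ← hB.ofReal_re_trace_mul hT, ← Complex.ofReal_mul, Complex.ofReal_re]
  simp

lemma IsQState.sum_sq_re_trace_mul_pauli_le_one {τ : Matrix (Fin 2) (Fin 2) ℂ}
    (hτ : IsQState τ) : ∑ i : Fin 3, ((τ * pauli i.succ).trace.re) ^ 2 ≤ 1 := by
  obtain ⟨hpsd, htr⟩ := hτ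
  have h10 : τ 1 0 = star (τ 0 1) := by
    simpa [conjTranspose_apply] using (congrFun (congrFun hpsd.1.eq 1) 0).symm
  have h00 := hpsd.1.coe_re_apply_self 0
  have h11 := hpsd.1.coe_re_apply_self 1
  have htr' : (τ 0 0).re + (τ 1 1).re = 1 := by
    rw [trace_fin_two] at htr
    simpa using congrArg Complex.re htr
  have hdet : (τ 0 1).re ^ 2 + (τ 0 1).im ^ 2 ≤ (τ 0 0).re * (τ 1 1).re := by
    have := (Complex.nonneg_iff.mp hpsd.det_nonneg).1
    rw [det_fin_two, h10, ← h00, ← h11] at this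
    simpa [Complex.mul_re, sq] using this
  have hx : (τ * pauli 1).trace.re = 2 * (τ 0 1).re := by
    simp [pauli, trace_fin_two, mul_apply, h10, two_mul]
  have hy : (τ * pauli 2).trace.re = -2 * (τ 0 1).im := by
    simp [pauli, trace_fin_two, mul_apply, h10, two_mul]
  have hz : (τ * pauli 3).trace.re = (τ 0 0).re - (τ 1 1).re := by
    simp [pauli, trace_fin_two, mul_apply, sub_eq_add_neg]
  rw [Fin.sum_univ_three]
  simp only [Fin.succ_zero_eq_one, Fin.succ_one_eq_two, Fin.reduceSucc, hx, hy, hz]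
  nlinarith

lemma Finset.sum_mul_mul_le_of_abs_le {ι : Type*} (s : Finset ι) {c a b : ι → ℝ} {M : ℝ}
    (hM : 0 ≤ M) (hc : ∀ i ∈ s, |c i| ≤ M) (ha : ∑ i ∈ s, a i ^ 2 ≤ 1)
    (hb : ∑ i ∈ s, b i ^ 2 ≤ 1) : ∑ i ∈ s, c i * (a i * b i) ≤ M := by
  have hterm : ∀ i ∈ s, c i * (a i * b i) ≤ M / 2 * (a i ^ 2 + b i ^ 2) := fun i hi => by
    have hab : 2 * |a i * b i| ≤ a i ^ 2 + b i ^ 2 := by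
      rw [abs_mul, ← sq_abs (a i), ← sq_abs (b i), ← mul_assoc]
      exact two_mul_le_add_sq _ _
    calc c i * (a i * b i) ≤ |c i| * |a i * b i| := by rw [← abs_mul]; exact le_abs_self _
      _ ≤ M * |a i * b i| := by gcongr; exact hc i hi
      _ ≤ M / 2 * (a i ^ 2 + b i ^ 2) := by nlinarith
  calc ∑ i ∈ s, c i * (a i * b i)
      ≤ ∑ i ∈ s, M / 2 * (a i ^ 2 + b i ^ 2) := Finset.sum_le_sum hterm
    _ = M / 2 * (∑ i ∈ s, a i ^ 2 + ∑ i ∈ s, b i ^ 2) := by rw [← mul_sum, sum_add_distrib]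
    _ ≤ M := by nlinarith

lemma re_trace_sep_mul_pauli_kronecker {k : ℕ} (w : Fin k → ℝ)
    {ρ₁ ρ₂ : Fin k → Matrix (Fin 2) (Fin 2) ℂ} (h₁ : ∀ m, (ρ₁ m).IsHermitian)
    (h₂ : ∀ m, (ρ₂ m).IsHermitian) (i : Fin 4) :
    ((∑ m, (w m : ℂ) • (ρ₁ m ⊗ₖ ρ₂ m)) * (pauli i ⊗ₖ pauli i)).trace.re =
      ∑ m, w m * ((ρ₁ m * pauli i).trace.re * (ρ₂ m * pauli i).trace.re) := by
  rw [Finset.sum_mul, trace_sum, Complex.re_sum]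
  refine Finset.sum_congr rfl fun m _ => ?_
  rw [smul_mul, trace_smul, smul_eq_mul, Complex.re_ofReal_mul,
    re_trace_kronecker_mul_kronecker (h₁ m) (pauli_isHermitian i) (h₂ m) (pauli_isHermitian i)]

lemma IsSepState.sum_mul_re_trace_mul_pauli_kronecker_le
    {ρ : Matrix (Fin 2 × Fin 2) (Fin 2 × Fin 2) ℂ} (hρ : IsSepState ρ) {c : Fin 3 → ℝ} {M : ℝ}
    (hM : 0 ≤ M) (hc : ∀ i, |c i| ≤ M) :
    ∑ i, c i * (ρ * (pauli i.succ ⊗ₖ pauli i.succ)).trace.re ≤ M := by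
  obtain ⟨k, w, ρ₁, ρ₂, hw0, hw1, h₁, h₂, rfl⟩ := hρ
  calc _ = ∑ m, w m * ∑ i, c i *
        ((ρ₁ m * pauli i.succ).trace.re * (ρ₂ m * pauli i.succ).trace.re) := by
        simp_rw [re_trace_sep_mul_pauli_kronecker w (fun m => (h₁ m).1.1) (fun m => (h₂ m).1.1),
          Finset.mul_sum]
        rw [Finset.sum_comm]
        exact Finset.sum_congr rfl fun m _ => Finset.sum_congr rfl fun i _ => by ring
    _ ≤ ∑ m, w m * M := Finset.sum_le_sum fun m _ => mul_le_mul_of_nonneg_left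
        (Finset.univ.sum_mul_mul_le_of_abs_le hM (fun i _ => hc i)
          (h₁ m).sum_sq_re_trace_mul_pauli_le_one (h₂ m).sum_sq_re_trace_mul_pauli_le_one) (hw0 m)
    _ = M := by rw [← Finset.sum_mul, hw1, one_mul]

theorem weyl_geometric_condition_general
    (ρ : Matrix (Fin 2 × Fin 2) (Fin 2 × Fin 2) ℂ)
    (p q r : ℝ)
    (hp : p = ((ρ * (pauli 1 ⊗ₖ pauli 1)).trace).re)
    (hq : q = ((ρ * (pauli 2 ⊗ₖ pauli 2)).trace).re)
    (hr : r = ((ρ * (pauli 3 ⊗ₖ pauli 3)).trace).re)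
    (h : max (max |p| |q|) |r| < p ^ 2 + q ^ 2 + r ^ 2) :
    ¬ IsSepState ρ := by
  intro hsep
  set M := max (max |p| |q|) |r|
  have hc : ∀ i, |![p, q, r] i| ≤ M := by
    intro i
    fin_cases i <;> simp [M]
  have hM : 0 ≤ M := (abs_nonneg _).trans (hc 0)
  refine h.not_ge ?_
  simpa [Fin.sum_univ_three, ← hp, ← hq, ← hr, sq] using
    hsep.sum_mul_re_trace_mul_pauli_kronecker_le hM hc

/-- geometric entanglement condition (standard improper metric)
for two-qubit states with diagonal full correlation tensor:
`p² + q² + r² > max(|p|, |q|, |r|)` implies entanglement. -/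
theorem weyl_geometric_condition
    (ρ : Matrix (Fin 2 × Fin 2) (Fin 2 × Fin 2) ℂ) (hρ : IsQState ρ)
    (hdiag : ∀ i j : Fin 4, i ≠ 0 → j ≠ 0 → i ≠ j →
      (ρ * (pauli i ⊗ₖ pauli j)).trace = 0)
    (p q r : ℝ)
    (hp : p = ((ρ * (pauli 1 ⊗ₖ pauli 1)).trace).re)
    (hq : q = ((ρ * (pauli 2 ⊗ₖ pauli 2)).trace).re)
    (hr : r = ((ρ * (pauli 3 ⊗ₖ pauli 3)).trace).re)
    (h : max (max |p| |q|) |r| < p ^ 2 + q ^ 2 + r ^ 2) :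
    ¬ IsSepState ρ :=
  weyl_geometric_condition_general ρ p q r hp hq hr h
end
end

section
/- Let {σ_i^A}_{i=0,…,d_A²−1} and {σ_j^B}_{j=0,…,d_B²−1} be normalized Hermitian operator bases for d_A×d_A and d_B×d_B matrices, let ρ be a state on ℂ^{d_A·d_B} with correlation tensor T_{ij} = Re(Tr(ρ·(σ_i^A ⊗ σ_j^B))), and let c ∈ ℝ be such that for all states ρ₁ on ℂ^{d_A} and ρ₂ on ℂ^{d_B}: Σ_{i,j ≥ 1} sgn(T_{ij})·Re(Tr(ρ₁·σ_i^A))·Re(Tr(ρ₂·σ_j^B)) ≤ c. If Σ_{i,j ≥ 1} |T_{ij}| > c, then ρ is not separable, i.e. ρ is entangled. (This is the nonlinear sign/Manhattan-norm entanglement criterion generated by the map 𝒢[ρ] = (1/4)·Σ_{i,j ≥ 1} sgn(T_{ij})·σ_i^A ⊗ σ_j^B.) -/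
open Matrix
open scoped Kronecker ComplexOrder

noncomputable section

lemma trace_mul_herm_im_zero {n : Type*} [Fintype n] [DecidableEq n]
    {A B : Matrix n n ℂ} (hA : A.IsHermitian) (hB : B.IsHermitian) :
    ((A * B).trace).im = 0 := by
  have h1 : star ((A * B).trace) = (A * B).trace := by
    rw [← Matrix.trace_conjTranspose, Matrix.conjTranspose_mul, hA.eq, hB.eq,
      Matrix.trace_mul_comm]
  exact Complex.conj_eq_iff_im.mp h1

lemma abs_eq_sign_mul (x : ℝ) : |x| = Real.sign x * x := by
  rcases lt_trichotomy x 0 with hx | hx | hx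
  · rw [Real.sign_of_neg hx, abs_of_neg hx]; ring
  · simp [hx]
  · rw [Real.sign_of_pos hx, abs_of_pos hx]; ring

/-- the nonlinear sign/Manhattan-norm entanglement criterion.
If `Σ_{i,j≥1} sgn(T_{ij})·Re Tr(ρ₁ σᵢᴬ)·Re Tr(ρ₂ σⱼᴮ) ≤ c` for all product
states while `Σ_{i,j≥1} |T_{ij}| > c`, then `ρ` is entangled. -/
theorem sign_manhattan_criterion
    {dA dB : ℕ} (hA0 : 0 < dA) (hB0 : 0 < dB)
    (σA : Fin (dA ^ 2) → Matrix (Fin dA) (Fin dA) ℂ) (hA : IsHermOpBasis σA)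
    (σB : Fin (dB ^ 2) → Matrix (Fin dB) (Fin dB) ℂ) (hB : IsHermOpBasis σB)
    (hA0' : ∃ t : ℝ, σA ⟨0, pow_pos hA0 2⟩ = (t : ℂ) • 1)
    (hB0' : ∃ t : ℝ, σB ⟨0, pow_pos hB0 2⟩ = (t : ℂ) • 1)
    (ρ : Matrix (Fin dA × Fin dB) (Fin dA × Fin dB) ℂ) (hρ : IsQState ρ)
    (T : Fin (dA ^ 2) → Fin (dB ^ 2) → ℝ)
    (hT : ∀ i j, T i j = ((ρ * (σA i ⊗ₖ σB j)).trace).re)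
    (c : ℝ)
    (hc : ∀ (ρ₁ : Matrix (Fin dA) (Fin dA) ℂ) (ρ₂ : Matrix (Fin dB) (Fin dB) ℂ),
      IsQState ρ₁ → IsQState ρ₂ →
      ∑ i ∈ Finset.univ \ {(⟨0, pow_pos hA0 2⟩ : Fin (dA ^ 2))},
        ∑ j ∈ Finset.univ \ {(⟨0, pow_pos hB0 2⟩ : Fin (dB ^ 2))},
          Real.sign (T i j) * ((ρ₁ * σA i).trace).re * ((ρ₂ * σB j).trace).re ≤ c)
    (h : c < ∑ i ∈ Finset.univ \ {(⟨0, pow_pos hA0 2⟩ : Fin (dA ^ 2))},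
        ∑ j ∈ Finset.univ \ {(⟨0, pow_pos hB0 2⟩ : Fin (dB ^ 2))}, |T i j|) :
    ¬ IsSepState ρ := by
  rintro ⟨k, p, ρ₁, ρ₂, hp, hps, h1, h2, hrep⟩
  set SA := Finset.univ \ {(⟨0, pow_pos hA0 2⟩ : Fin (dA ^ 2))} with hSA
  set SB := Finset.univ \ {(⟨0, pow_pos hB0 2⟩ : Fin (dB ^ 2))} with hSB
  set a : Fin k → Fin (dA ^ 2) → ℝ := fun m i => ((ρ₁ m * σA i).trace).re with ha
  set b : Fin k → Fin (dB ^ 2) → ℝ := fun m j => ((ρ₂ m * σB j).trace).re with hb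
  have haim : ∀ m i, ((ρ₁ m * σA i).trace).im = 0 :=
    fun m i => trace_mul_herm_im_zero (h1 m).1.1 (hA.1 i)
  have hbim : ∀ m j, ((ρ₂ m * σB j).trace).im = 0 :=
    fun m j => trace_mul_herm_im_zero (h2 m).1.1 (hB.1 j)
  have hTsum : ∀ i j, T i j = ∑ m, p m * (a m i * b m j) := by
    intro i j
    rw [hT, hrep, Finset.sum_mul, Matrix.trace_sum, Complex.re_sum]
    refine Finset.sum_congr rfl fun m _ => ?_
    rw [smul_mul_assoc, Matrix.trace_smul, ← Matrix.mul_kronecker_mul,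
      Matrix.trace_kronecker]
    simp [Complex.mul_re, haim m i, hbim m j, ha, hb]
  have key : ∑ i ∈ SA, ∑ j ∈ SB, |T i j| ≤ c := by
    have e1 : ∀ i j, |T i j| = ∑ m, p m * (Real.sign (T i j) * (a m i * b m j)) := by
      intro i j
      rw [abs_eq_sign_mul, hTsum i j, Finset.mul_sum]
      exact Finset.sum_congr rfl fun m _ => by ring
    calc ∑ i ∈ SA, ∑ j ∈ SB, |T i j|
        = ∑ m, ∑ i ∈ SA, ∑ j ∈ SB, p m * (Real.sign (T i j) * (a m i * b m j)) := by
          simp_rw [e1]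
          rw [Finset.sum_congr rfl fun i _ => Finset.sum_comm, Finset.sum_comm]
      _ = ∑ m, p m * ∑ i ∈ SA, ∑ j ∈ SB, Real.sign (T i j) * (a m i * b m j) := by
          refine Finset.sum_congr rfl fun m _ => ?_
          simp_rw [Finset.mul_sum]
      _ ≤ ∑ m : Fin k, p m * c := by
          refine Finset.sum_le_sum fun m _ => mul_le_mul_of_nonneg_left ?_ (hp m)
          have := hc (ρ₁ m) (ρ₂ m) (h1 m) (h2 m)
          simpa [mul_assoc, ha, hb] using this
      _ = c := by rw [← Finset.sum_mul, hps, one_mul]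
  exact absurd key (not_le.mpr h)
end
end
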